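/- For the braided Hopf algebra H(X) (shuffle product, deconcatenation coproduct), the antipode axiom holds in the form: for all r ≥ 1, ∑_{s=0}^{r} B(s, r-s) ∘ (S_s ⊗ id^{⊗(r-s)}) = 0, where S_s = (-1)^s times the Matsumoto lift of the longest element of the symmetric group S_s acting on the first s strands. -/

import Mathlib

/- We work in the braid group algebra, modelled as an associative ring `A` equipped with a
family `ψ i` of elements satisfying the braid relations.  The braided binomials `Bb`
(sums of Matsumoto lifts of shuffle permutations) are encoded through their defining
recursion `B(r+1,s) = B(r,s)^{[1]} + B(r+1,s-1)^{[1]} · T_{r+1,1}`. -/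

variable {A : Type*} [Ring A]

/-- Shift of the generator family by `k`: `(shiftFam ψ k) i = ψ (i + k)`. -/
def shiftFam (ψ : ℕ → A) (k : ℕ) : ℕ → A := fun i => ψ (i + k)

/-- The descending product `ψ (j+n-1) ⋯ ψ (j+1) ψ j`. -/
def fall (ψ : ℕ → A) : ℕ → ℕ → A
  | _, 0 => 1
  | j, n + 1 => fall ψ (j + 1) n * ψ j

/-- `T_{m,n} = (ψ_n ⋯ ψ_1)(ψ_{n+1} ⋯ ψ_2) ⋯ (ψ_{n+m-1} ⋯ ψ_m)`, the braiding of the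
first `m` strands past the next `n` strands. -/
def Tb (ψ : ℕ → A) : ℕ → ℕ → A
  | 0, _ => 1
  | m + 1, n => Tb ψ m n * fall ψ (m + 1) n

/-- The braided binomial `B(r,s)`: the sum of the Matsumoto lifts of all `(r,s)`-shuffle
permutations. -/
def Bb (ψ : ℕ → A) : ℕ → ℕ → A
  | 0, _ => 1
  | _ + 1, 0 => 1
  | r + 1, s + 1 =>
      Bb (shiftFam ψ 1) r (s + 1) + Bb (shiftFam ψ 1) (r + 1) s * Tb ψ (r + 1) 1
  termination_by r s => (r, s)

/-- The signed half-twist: `S_s = (-1)^s Ψ_1 (Ψ_2Ψ_1) ⋯ (Ψ_{s-1} ⋯ Ψ_1)` is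
`(-1)^s • halfTwist ψ s`, the Matsumoto lift of the longest element of `S_s`. -/
def halfTwist (ψ : ℕ → A) : ℕ → A
  | 0 => 1
  | s + 1 => halfTwist ψ s * fall ψ 1 s

/-! Unfolding the recursion of `B(s, r-s)` once, the summand for `0 < s < r` becomes
`B'(s-1, r-s) S_s + B'(s, r-s-1) T_{s,1} S_s`, where `B'` is built from the shifted generators.
Since `T_{s,1}` commutes past the half-twist to complete it, `T_{s,1} S_s = -S_{s+1}`, so the
summands telescope, and the two boundary terms `1` and `S_r` cancel the remainder. -/

def signedTwist (ψ : ℕ → A) (s : ℕ) : A := (-1 : A) ^ s * halfTwist ψ s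

lemma signedTwist_zero (ψ : ℕ → A) : signedTwist ψ 0 = 1 := by
  simp [signedTwist, halfTwist]

lemma signedTwist_one (ψ : ℕ → A) : signedTwist ψ 1 = -1 := by
  simp [signedTwist, halfTwist, fall]

section Braiding

variable (ψ : ℕ → A)

lemma fall_succ (j n : ℕ) : fall ψ j (n + 1) = ψ (j + n) * fall ψ j n := by
  induction n generalizing j with
  | zero => simp [fall]
  | succ n ih =>
    change fall ψ (j + 1) (n + 1) * ψ j = ψ (j + (n + 1)) * (fall ψ (j + 1) n * ψ j)
    rw [ih, mul_assoc, Nat.add_right_comm j 1 n]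
    rfl

lemma Tb_one_succ (s : ℕ) : Tb ψ (s + 1) 1 = Tb ψ s 1 * ψ (s + 1) := by
  simp [Tb, fall]

lemma commute_fall (hcomm : ∀ i j, i + 2 ≤ j → ψ i * ψ j = ψ j * ψ i)
    {j n k : ℕ} (h : j + n + 1 ≤ k) : Commute (ψ k) (fall ψ j n) := by
  induction n generalizing j with
  | zero => exact Commute.one_right _
  | succ n ih =>
    exact (ih (by omega)).mul_right (hcomm j k (by omega)).symm

lemma commute_halfTwist (hcomm : ∀ i j, i + 2 ≤ j → ψ i * ψ j = ψ j * ψ i)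
    {s k : ℕ} (h : s + 1 ≤ k) : Commute (ψ k) (halfTwist ψ s) := by
  induction s with
  | zero => exact Commute.one_right _
  | succ s ih => exact (ih (by omega)).mul_right (commute_fall ψ hcomm (by omega))

lemma Tb_one_mul_halfTwist (hcomm : ∀ i j, i + 2 ≤ j → ψ i * ψ j = ψ j * ψ i) (s : ℕ) :
    Tb ψ s 1 * halfTwist ψ s = halfTwist ψ (s + 1) := by
  induction s with
  | zero => simp [Tb, halfTwist, fall]
  | succ s ih =>
    calc Tb ψ (s + 1) 1 * halfTwist ψ (s + 1)
        = Tb ψ s 1 * ψ (s + 1) * (halfTwist ψ s * fall ψ 1 s) := by rw [Tb_one_succ, halfTwist]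
      _ = Tb ψ s 1 * halfTwist ψ s * (ψ (s + 1) * fall ψ 1 s) := by
          rw [mul_assoc, ← mul_assoc (ψ (s + 1)), (commute_halfTwist ψ hcomm le_rfl).eq]
          simp only [mul_assoc]
      _ = halfTwist ψ (s + 1) * fall ψ 1 (s + 1) := by rw [ih, fall_succ, Nat.add_comm 1 s]
      _ = halfTwist ψ (s + 2) := rfl

lemma Tb_one_mul_signedTwist (hcomm : ∀ i j, i + 2 ≤ j → ψ i * ψ j = ψ j * ψ i) (s : ℕ) :
    Tb ψ s 1 * signedTwist ψ s = -signedTwist ψ (s + 1) := by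
  rw [signedTwist, signedTwist, ← mul_assoc, ((Commute.neg_one_right _).pow_right s).eq,
    mul_assoc, Tb_one_mul_halfTwist ψ hcomm, pow_succ, mul_neg_one, neg_mul, neg_neg]

end Braiding

lemma Bb_zero_left (ψ : ℕ → A) (s : ℕ) : Bb ψ 0 s = 1 := by
  rw [Bb]

lemma Bb_zero_right (ψ : ℕ → A) (r : ℕ) : Bb ψ r 0 = 1 := by
  cases r <;> rw [Bb]

lemma Bb_succ_mul_signedTwist (ψ : ℕ → A)
    (hcomm : ∀ i j, i + 2 ≤ j → ψ i * ψ j = ψ j * ψ i) (t d : ℕ) :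
    Bb ψ (t + 1) (d + 1) * signedTwist ψ (t + 1) =
      Bb (shiftFam ψ 1) t (d + 1) * signedTwist ψ (t + 1) -
        Bb (shiftFam ψ 1) (t + 1) d * signedTwist ψ (t + 2) := by
  rw [Bb, add_mul, mul_assoc, Tb_one_mul_signedTwist ψ hcomm, mul_neg, sub_eq_add_neg]

theorem antipode_axiom_shuffle_general (ψ : ℕ → A)
    (hcomm : ∀ i j, i + 2 ≤ j → ψ i * ψ j = ψ j * ψ i)
    (r : ℕ) (hr : 1 ≤ r) :
    (∑ s ∈ Finset.range (r + 1),
        Bb ψ s (r - s) * ((-1 : A) ^ s * halfTwist ψ s)) = 0 := by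
  obtain ⟨n, rfl⟩ := Nat.exists_eq_add_of_le' hr
  change ∑ s ∈ Finset.range (n + 2), Bb ψ s (n + 1 - s) * signedTwist ψ s = 0
  set w : ℕ → A := fun i => Bb (shiftFam ψ 1) i (n - i) * signedTwist ψ (i + 1)
  have interior : ∀ i ∈ Finset.range n,
      Bb ψ (i + 1) (n + 1 - (i + 1)) * signedTwist ψ (i + 1) = w i - w (i + 1) := by
    intro i hi
    obtain ⟨d, hd⟩ : ∃ d, n - i = d + 1 := ⟨n - i - 1, by grind⟩
    simp only [w, Nat.add_sub_add_right, hd, show n - (i + 1) = d by omega]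
    exact Bb_succ_mul_signedTwist ψ hcomm i d
  rw [Finset.sum_range_succ, Finset.sum_range_succ', Finset.sum_congr rfl interior,
    Finset.sum_range_sub']
  simp only [w, Nat.sub_zero, Nat.sub_self, zero_add, Bb_zero_left, Bb_zero_right,
    signedTwist_zero, signedTwist_one, one_mul]
  abel

/-- the antipode axiom for the braided Hopf algebra `H(X)`: for all `r ≥ 1`,
`∑_{s=0}^{r} B(s, r-s) ∘ (S_s ⊗ id^{⊗(r-s)}) = 0`, where
`S_s = (-1)^s · (Matsumoto lift of the longest element of 𝔖_s)` acts on the first `s`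
strands. -/
theorem antipode_axiom_shuffle (ψ : ℕ → A)
    (hbraid : ∀ i, ψ i * ψ (i + 1) * ψ i = ψ (i + 1) * ψ i * ψ (i + 1))
    (hcomm : ∀ i j, i + 2 ≤ j → ψ i * ψ j = ψ j * ψ i)
    (r : ℕ) (hr : 1 ≤ r) :
    (∑ s ∈ Finset.range (r + 1),
        Bb ψ s (r - s) * ((-1 : A) ^ s * halfTwist ψ s)) = 0 :=
  antipode_axiom_shuffle_general ψ hcomm r hr
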